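/- A coalgebra for the shape–contents comonad is a traversable functor: if σ : T ⟶ K T is a coalgebra for the comonad K (i.e. ε ∘ σ = id and K σ ∘ σ = δ ∘ σ), then the family of natural transformations trv_F : T ∘ F ⟶ F ∘ T, defined for each applicative functor F by trv_F = F ε_T ∘ n_{T,F} ∘ σ — where n_{T,F} : K T ∘ F ⟶ F ∘ K T is the canonical map sending (n; s, c) with c : Fin n → F a to the result of combining the n values c(i) using the lax monoidal structure of F, paired with the shape s — satisfies unitarity (trv_{Id} = id) and linearity (trv_{F∘G} = F trv_G ∘ trv_F for all applicative F, G, with F∘G carrying the composite applicative structure). -/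

import Mathlib

/-!
A coalgebra for the shape–contents comonad is a traversable functor: if `σ : T ⟶ K T` is
a coalgebra for the comonad `K` (`(K T)(a) = Σₙ T(Fin n) × (Fin n → a)`, with counit
`ε (n; s, c) = T(c)(s)` and comultiplication `δ (n; s, c) = (n; (n; s, id), c)`), then the
family `trv_F = F ε_T ∘ n_{T,F} ∘ σ` — where `n_{T,F} : K T ∘ F ⟶ F ∘ K T` combines, by
the lax monoidal structure of the applicative functor `F`, the `n` values of the contents
function and pairs them with the shape — satisfies unitarity (`trv_{Id} = id`) and
linearity (`trv_{F∘G} = F trv_G ∘ trv_F`, the composite `F ∘ G` carrying the composite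
applicative structure).
-/

open CategoryTheory

/-- The shape–contents functor on objects: `(K T)(a) = Σₙ T(Fin n) × (Fin n → a)`. -/
@[simps]
def KObj (T : Type ⥤ Type) : Type ⥤ Type where
  obj a := Σ n : ℕ, T.obj (Fin n) × (Fin n → a)
  map f := TypeCat.ofHom fun x => ⟨x.1, x.2.1, f ∘ x.2.2⟩

/-- The shape–contents endofunctor `K` of `[Set, Set]`. -/
@[simps]
def K : (Type ⥤ Type) ⥤ (Type ⥤ Type) where
  obj := KObj
  map h :=
    { app := fun a => TypeCat.ofHom fun x => ⟨x.1, h.app (Fin x.1) x.2.1, x.2.2⟩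
      naturality := fun _ _ _ => rfl }
  map_id := by intros; rfl
  map_comp := by intros; rfl

/-- The counit `ε : K T ⟶ T`, `ε (n; s, c) = T(c)(s)`. -/
def Keps (T : Type ⥤ Type) : K.obj T ⟶ T where
  app a := TypeCat.ofHom fun x => T.map (TypeCat.ofHom x.2.2) x.2.1
  naturality := by
    intro a b f
    ext x
    exact FunctorToTypes.map_comp_apply T (TypeCat.ofHom x.2.2) f x.2.1

/-- The comultiplication `δ : K T ⟶ K (K T)`, `δ (n; s, c) = (n; (n; s, id), c)`. -/
def Kdelta (T : Type ⥤ Type) : K.obj T ⟶ K.obj (K.obj T) where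
  app a := TypeCat.ofHom fun x => ⟨x.1, ⟨x.1, x.2.1, id⟩, x.2.2⟩
  naturality := fun _ _ _ => rfl

/-- An applicative functor: a lax monoidal endofunctor of `(Set, ×)`. -/
structure AppFunctor where
  /-- the underlying endofunctor of `Set` -/
  F : Type ⥤ Type
  /-- the unit `1 ⟶ F 1` of the lax monoidal structure -/
  unit : Unit → F.obj Unit
  /-- the multiplication (tensorator) `F X × F Y ⟶ F (X × Y)` -/
  mult : ∀ X Y : Type, F.obj X × F.obj Y → F.obj (X × Y)
  mult_natural : ∀ {X X' Y Y' : Type} (f : X → X') (g : Y → Y') (x : F.obj X) (y : F.obj Y),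
    F.map (TypeCat.ofHom (Prod.map f g)) (mult X Y (x, y)) =
      mult X' Y' (F.map (TypeCat.ofHom f) x, F.map (TypeCat.ofHom g) y)
  mult_assoc : ∀ (X Y Z : Type) (x : F.obj X) (y : F.obj Y) (z : F.obj Z),
    F.map (TypeCat.ofHom fun p => (p.1.1, (p.1.2, p.2)))
        (mult (X × Y) Z (mult X Y (x, y), z)) = mult X (Y × Z) (x, mult Y Z (y, z))
  left_unit : ∀ (X : Type) (x : F.obj X),
    F.map (TypeCat.ofHom Prod.snd) (mult Unit X (unit Unit.unit, x)) = x
  right_unit : ∀ (X : Type) (x : F.obj X),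
    F.map (TypeCat.ofHom Prod.fst) (mult X Unit (x, unit Unit.unit)) = x

/-- The identity applicative functor. -/
def idApp : AppFunctor where
  F := 𝟭 Type
  unit := id
  mult _ _ := id
  mult_natural := by intros; rfl
  mult_assoc := by intros; rfl
  left_unit := by intros; rfl
  right_unit := by intros; rfl

/-- The composite applicative functor `P ∘ Q : x ↦ P (Q x)`, with the composite lax
monoidal structure. -/
def compApp (P Q : AppFunctor) : AppFunctor where
  F := Q.F ⋙ P.F
  unit u := P.F.map (TypeCat.ofHom Q.unit) (P.unit u)
  mult X Y z := P.F.map (TypeCat.ofHom (Q.mult X Y)) (P.mult (Q.F.obj X) (Q.F.obj Y) z)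
  mult_natural := by
    intro X X' Y Y' f g x y
    have key : ∀ (x : P.F.obj (Q.F.obj X)) (y : P.F.obj (Q.F.obj Y)),
        P.F.map (Q.F.map (TypeCat.ofHom (Prod.map f g)))
            (P.F.map (TypeCat.ofHom (Q.mult X Y)) (P.mult (Q.F.obj X) (Q.F.obj Y) (x, y))) =
          P.F.map (TypeCat.ofHom (Q.mult X' Y'))
            (P.mult (Q.F.obj X') (Q.F.obj Y')
              (P.F.map (TypeCat.ofHom (Q.F.map (TypeCat.ofHom f))) x,
                P.F.map (TypeCat.ofHom (Q.F.map (TypeCat.ofHom g))) y)) := by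
      intro x y
      rw [← P.mult_natural (Q.F.map (TypeCat.ofHom f)) (Q.F.map (TypeCat.ofHom g)) x y,
        ← FunctorToTypes.map_comp_apply, ← FunctorToTypes.map_comp_apply]
      refine congrArg (fun q => P.F.map q (P.mult (Q.F.obj X) (Q.F.obj Y) (x, y))) ?_
      ext w
      show Q.F.map (TypeCat.ofHom (Prod.map f g)) (Q.mult X Y w) =
        Q.mult X' Y' (Q.F.map (TypeCat.ofHom f) w.1, Q.F.map (TypeCat.ofHom g) w.2)
      exact Q.mult_natural f g w.1 w.2
    exact key x y
  mult_assoc := by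
    intro X Y Z x y z
    have key : ∀ (x : P.F.obj (Q.F.obj X)) (y : P.F.obj (Q.F.obj Y)) (z : P.F.obj (Q.F.obj Z)),
        P.F.map (Q.F.map (TypeCat.ofHom fun p => (p.1.1, (p.1.2, p.2))))
            (P.F.map (TypeCat.ofHom (Q.mult (X × Y) Z))
              (P.mult (Q.F.obj (X × Y)) (Q.F.obj Z)
                (P.F.map (TypeCat.ofHom (Q.mult X Y))
                  (P.mult (Q.F.obj X) (Q.F.obj Y) (x, y)), z))) =
          P.F.map (TypeCat.ofHom (Q.mult X (Y × Z)))
            (P.mult (Q.F.obj X) (Q.F.obj (Y × Z))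
              (x, P.F.map (TypeCat.ofHom (Q.mult Y Z))
                (P.mult (Q.F.obj Y) (Q.F.obj Z) (y, z)))) := by
      intro x y z
      conv_lhs =>
        rw [show z = P.F.map (TypeCat.ofHom id) z from (FunctorToTypes.map_id_apply P.F z).symm,
          ← P.mult_natural (Q.mult X Y) id
            (P.mult (Q.F.obj X) (Q.F.obj Y) (x, y)) z,
          ← FunctorToTypes.map_comp_apply, ← FunctorToTypes.map_comp_apply]
      conv_rhs =>
        rw [show x = P.F.map (TypeCat.ofHom id) x from (FunctorToTypes.map_id_apply P.F x).symm,
          ← P.mult_natural id (Q.mult Y Z) x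
            (P.mult (Q.F.obj Y) (Q.F.obj Z) (y, z)),
          ← P.mult_assoc (Q.F.obj X) (Q.F.obj Y) (Q.F.obj Z) x y z,
          ← FunctorToTypes.map_comp_apply, ← FunctorToTypes.map_comp_apply]
      refine congrArg (fun q => P.F.map q
        (P.mult _ (Q.F.obj Z) (P.mult (Q.F.obj X) (Q.F.obj Y) (x, y), z))) ?_
      ext w
      show Q.F.map (TypeCat.ofHom fun p => (p.1.1, (p.1.2, p.2)))
          (Q.mult (X × Y) Z (Q.mult X Y w.1, w.2)) =
        Q.mult X (Y × Z) (w.1.1, Q.mult Y Z (w.1.2, w.2))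
      exact Q.mult_assoc X Y Z w.1.1 w.1.2 w.2
    exact key x y z
  left_unit := by
    intro X x
    have key : ∀ x : P.F.obj (Q.F.obj X),
        P.F.map (Q.F.map (TypeCat.ofHom Prod.snd))
            (P.F.map (TypeCat.ofHom (Q.mult Unit X))
              (P.mult (Q.F.obj Unit) (Q.F.obj X)
                (P.F.map (TypeCat.ofHom Q.unit) (P.unit Unit.unit), x))) =
          x := by
      intro x
      conv_lhs =>
        rw [show x = P.F.map (TypeCat.ofHom id) x from (FunctorToTypes.map_id_apply P.F x).symm]
      rw [← P.mult_natural Q.unit id (P.unit Unit.unit) x,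
        ← FunctorToTypes.map_comp_apply, ← FunctorToTypes.map_comp_apply]
      have : TypeCat.ofHom (Prod.map Q.unit id) ≫ TypeCat.ofHom (Q.mult Unit X) ≫
          Q.F.map (TypeCat.ofHom Prod.snd) =
          TypeCat.ofHom (Prod.snd : Unit × Q.F.obj X → Q.F.obj X) := by
        ext w
        show Q.F.map (TypeCat.ofHom Prod.snd) (Q.mult Unit X (Q.unit w.1, w.2)) = w.2
        exact Q.left_unit X w.2
      rw [this]
      exact P.left_unit (Q.F.obj X) x
    exact key x
  right_unit := by
    intro X x
    have key : ∀ x : P.F.obj (Q.F.obj X),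
        P.F.map (Q.F.map (TypeCat.ofHom Prod.fst))
            (P.F.map (TypeCat.ofHom (Q.mult X Unit))
              (P.mult (Q.F.obj X) (Q.F.obj Unit)
                (x, P.F.map (TypeCat.ofHom Q.unit) (P.unit Unit.unit)))) =
          x := by
      intro x
      conv_lhs =>
        rw [show x = P.F.map (TypeCat.ofHom id) x from (FunctorToTypes.map_id_apply P.F x).symm]
      rw [← P.mult_natural id Q.unit x (P.unit Unit.unit),
        ← FunctorToTypes.map_comp_apply, ← FunctorToTypes.map_comp_apply]
      have hfn : TypeCat.ofHom (Prod.map id Q.unit) ≫ TypeCat.ofHom (Q.mult X Unit) ≫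
          Q.F.map (TypeCat.ofHom Prod.fst) =
          TypeCat.ofHom (Prod.fst : Q.F.obj X × Unit → Q.F.obj X) := by
        ext w
        show Q.F.map (TypeCat.ofHom Prod.fst) (Q.mult X Unit (w.1, Q.unit w.2)) = w.1
        exact Q.right_unit X w.1
      rw [hfn]
      exact P.right_unit (Q.F.obj X) x
    exact key x

/-- Combining `n` values of `F b` into an `F`-value of `n`-tuples, using the lax monoidal
structure of the applicative functor `F`. -/
def combine (P : AppFunctor) (b : Type) : ∀ n : ℕ, (Fin n → P.F.obj b) → P.F.obj (Fin n → b)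
  | 0, _ => P.F.map (TypeCat.ofHom fun _ i => i.elim0) (P.unit Unit.unit)
  | n + 1, c =>
      P.F.map (TypeCat.ofHom fun w => Fin.cons w.1 w.2)
        (P.mult b (Fin n → b) (c 0, combine P b n (fun i => c i.succ)))

/-- The canonical distribution map `n_{T,F} : K T ∘ F ⟶ F ∘ K T`, sending `(n; s, c)`
with `c : Fin n → F a` to the combination of the `n` values of `c` paired with the
shape `s`. -/
def nMap (P : AppFunctor) (T : Type ⥤ Type) (a : Type) :
    (K.obj T).obj (P.F.obj a) → P.F.obj ((K.obj T).obj a) :=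
  fun x => P.F.map (TypeCat.ofHom fun c => ⟨x.1, x.2.1, c⟩) (combine P a x.1 x.2.2)

/-- The traversal `trv_{T,F} = F ε_T ∘ n_{T,F} ∘ σ : T ∘ F ⟶ F ∘ T` associated to a
coalgebra `σ : T ⟶ K T`. -/
def trv (T : Type ⥤ Type) (σ : T ⟶ K.obj T) (P : AppFunctor) (a : Type) :
    T.obj (P.F.obj a) → P.F.obj (T.obj a) :=
  fun x => P.F.map ((Keps T).app a) (nMap P T a (σ.app (P.F.obj a) x))

/-!
Both laws are checked on an element `x` with `σ x = (n; s, c)`. Combining in the identity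
applicative returns `c` itself, so `trv_Id x = ε (σ x) = x` by the counit law. Combining in
`P ∘ Q` is `Q`-combining after `P`-combining, and coassociativity says that `σ` fixes shapes,
`σ s = (n; s, id)`; by naturality `σ (T(e) s) = (n; s, e)` for every `e`, so `trv_Q` applied to
`ε (n; s, e)` combines exactly `e` again, which is linearity.
-/

lemma AppFunctor.mult_map_right (P : AppFunctor) {X Y Y' : Type} (g : Y → Y') (x : P.F.obj X)
    (y : P.F.obj Y) :
    P.mult X Y' (x, P.F.map (TypeCat.ofHom g) y) =
      P.F.map (TypeCat.ofHom (Prod.map id g)) (P.mult X Y (x, y)) := by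
  rw [P.mult_natural]
  exact congrArg (fun x' => P.mult X Y' (x', _)) (P.F.map_id_apply X x).symm

lemma compApp_F_map (P Q : AppFunctor) {X Y : Type} (f : X ⟶ Y) (x : P.F.obj (Q.F.obj X)) :
    (compApp P Q).F.map f x = P.F.map (Q.F.map f) x := rfl

lemma compApp_unit (P Q : AppFunctor) :
    (compApp P Q).unit () = P.F.map (TypeCat.ofHom Q.unit) (P.unit ()) := rfl

lemma combine_idApp (b : Type) : ∀ (n : ℕ) (c : Fin n → b), combine idApp b n c = c
  | 0, _ => funext fun i => i.elim0
  | n + 1, c => by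
    show Fin.cons (c 0) (combine idApp b n (Fin.tail c)) = c
    rw [combine_idApp b n, Fin.cons_self_tail]

lemma combine_compApp (P Q : AppFunctor) (a : Type) :
    ∀ (n : ℕ) (c : Fin n → P.F.obj (Q.F.obj a)),
      combine (compApp P Q) a n c =
        P.F.map (TypeCat.ofHom (combine Q a n)) (combine P (Q.F.obj a) n c)
  | 0, _ => by
    simp only [combine, compApp_F_map, compApp_unit, ← Functor.map_comp_apply]
    congr 1
  | n + 1, c => by
    change P.F.map (Q.F.map (TypeCat.ofHom fun w : a × (Fin n → a) =>
          (Fin.cons w.1 w.2 : Fin (n + 1) → a)))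
        (P.F.map (TypeCat.ofHom (Q.mult a (Fin n → a)))
          (P.mult _ _ (c 0, combine (compApp P Q) a n (Fin.tail c)))) = _
    rw [combine_compApp P Q a n, P.mult_map_right, combine]
    simp only [← Functor.map_comp_apply]
    -- both sides now map the same `P`-product; the functions agree since `Fin.cons` computes
    congr 1

section Coalgebra

variable {T : Type ⥤ Type} {σ : T ⟶ K.obj T}

lemma trv_eq_of_app_eq (P : AppFunctor) {a : Type} {x : T.obj (P.F.obj a)} {n : ℕ}
    {s : T.obj (Fin n)} {c : Fin n → P.F.obj a} (hx : σ.app _ x = ⟨n, s, c⟩) :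
    trv T σ P a x =
      P.F.map (TypeCat.ofHom fun e => T.map (TypeCat.ofHom e) s) (combine P a n c) := by
  rw [trv, hx]
  exact (P.F.map_comp_apply _ _ _).symm

lemma app_shape_eq_of_coassoc (hcoassoc : σ ≫ K.map σ = σ ≫ Kdelta T) {a : Type} {x : T.obj a}
    {n : ℕ} {s : T.obj (Fin n)} {c : Fin n → a} (hx : σ.app a x = ⟨n, s, c⟩) :
    σ.app (Fin n) s = ⟨n, s, id⟩ := by
  have h := congrArg (fun τ : T ⟶ K.obj (K.obj T) => τ.app a x) hcoassoc
  change (K.map σ).app a (σ.app a x) = (Kdelta T).app a (σ.app a x) at h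
  rw [hx] at h
  obtain ⟨-, h⟩ := Sigma.mk.inj h
  exact congrArg Prod.fst (eq_of_heq h)

lemma app_map_shape_eq_of_coassoc (hcoassoc : σ ≫ K.map σ = σ ≫ Kdelta T) {a b : Type}
    {x : T.obj a} {n : ℕ} {s : T.obj (Fin n)} {c : Fin n → a} (hx : σ.app a x = ⟨n, s, c⟩)
    (f : Fin n → b) : σ.app b (T.map (TypeCat.ofHom f) s) = ⟨n, s, f⟩ := by
  rw [NatTrans.naturality_apply, app_shape_eq_of_coassoc hcoassoc hx]
  rfl

lemma trv_idApp (hcounit : σ ≫ Keps T = 𝟙 T) (a : Type) (x : T.obj a) :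
    trv T σ idApp a x = x := by
  obtain ⟨n, s, c, hx⟩ : ∃ n s c, σ.app a x = ⟨n, s, c⟩ := ⟨_, _, _, rfl⟩
  have h := congrArg (fun τ : T ⟶ T => τ.app a x) hcounit
  change (Keps T).app a (σ.app a x) = x at h
  rw [hx] at h
  rw [trv_eq_of_app_eq idApp hx, combine_idApp]
  exact h

lemma trv_compApp (hcoassoc : σ ≫ K.map σ = σ ≫ Kdelta T) (P Q : AppFunctor) (a : Type)
    (x : T.obj (P.F.obj (Q.F.obj a))) :
    trv T σ (compApp P Q) a x =
      P.F.map (TypeCat.ofHom (trv T σ Q a)) (trv T σ P (Q.F.obj a) x) := by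
  obtain ⟨n, s, c, hx⟩ : ∃ n s c, σ.app _ x = ⟨n, s, c⟩ := ⟨_, _, _, rfl⟩
  have hQ (e : Fin n → Q.F.obj a) : trv T σ Q a (T.map (TypeCat.ofHom e) s) =
      Q.F.map (TypeCat.ofHom fun e' => T.map (TypeCat.ofHom e') s) (combine Q a n e) :=
    trv_eq_of_app_eq Q (app_map_shape_eq_of_coassoc hcoassoc hx e)
  rw [trv_eq_of_app_eq (compApp P Q) hx, trv_eq_of_app_eq P hx, combine_compApp,
    compApp_F_map, ← Functor.map_comp_apply, ← Functor.map_comp_apply]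
  congr 3
  ext e
  exact (hQ e).symm

end Coalgebra

/-- A coalgebra for the shape–contents comonad is a traversable functor: if
`σ : T ⟶ K T` satisfies the coalgebra laws `ε ∘ σ = id` and `K σ ∘ σ = δ ∘ σ`, then the
induced family `trv_F = F ε_T ∘ n_{T,F} ∘ σ` satisfies unitarity (`trv_{Id} = id`) and
linearity (`trv_{F∘G} = F trv_G ∘ trv_F`, with the composite applicative structure on
`F ∘ G`). -/
theorem coalgebra_of_K_is_traversable (T : Type ⥤ Type) (σ : T ⟶ K.obj T)
    (hcounit : σ ≫ Keps T = 𝟙 T) (hcoassoc : σ ≫ K.map σ = σ ≫ Kdelta T) :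
    (∀ (a : Type) (x : T.obj a), trv T σ idApp a x = x) ∧
    (∀ (P Q : AppFunctor) (a : Type) (x : T.obj (P.F.obj (Q.F.obj a))),
      trv T σ (compApp P Q) a x = P.F.map (TypeCat.ofHom (trv T σ Q a)) (trv T σ P (Q.F.obj a) x)) :=
  ⟨trv_idApp hcounit, trv_compApp hcoassoc⟩
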